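/- Let P be a finite poset such that J(P) is tCDE with edge density c. Then the antichain cardinality statistic I ↦ #max(I) is c-mesic with respect to the action of rowmotion Φ_row on J(P): the average of #max(I) over every Φ_row-orbit equals c. If moreover P is ranked, then for every permutation σ of the ranks of P, the antichain cardinality statistic is also c-mesic with respect to the action of the rank-permuted rowmotion Φ_{row(σ)} on J(P). -/

import Mathlib

/-!
Let `Φ` be rowmotion, or a composition of all toggles in which each rank forms one block, and let
`μ` be the uniform distribution on a `Φ`-orbit; `μ` is `Φ`-invariant. For rowmotion,
`T⁺_p(I) = T⁻_p(Φ I)`, so `T⁺_p` and `T⁻_p` have the same `μ`-expectation. For a toggle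
composition, `p` is added to the ideal along an orbit exactly as often as it is removed, and this
counts `T⁺_p` and `T⁻_p` at the moment `p` is toggled; because all lower (resp. upper) covers of
`p` are toggled on one side of `p`, that moment can be moved to the start or the end of `Φ`
without changing the count. Hence `μ` is toggle-symmetric and, by tCDE, has expected down-degree
`c`. Finally the down-degree of `I` in `J(P)` is `#max(I)`, since the ideals covered by `I` are
the `I \ {p}` with `p ∈ max(I)`.
-/

open scoped Classical

noncomputable section

namespace CDEPaper

/-- The down-degree of `p`: the number of elements that `p` covers, as a real number. -/
def ddeg {α : Type*} [PartialOrder α] (p : α) : ℝ :=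
  (Nat.card {q : α // q ⋖ p} : ℝ)

/-- The expectation of the statistic `f` with respect to the weights `μ`. -/
def expect {α : Type*} (μ : α → ℝ) (f : α → ℝ) : ℝ :=
  ∑ᶠ p, μ p * f p

/-- The uniform distribution on a finite type. -/
def uni (α : Type*) : α → ℝ :=
  fun _ => (Nat.card α : ℝ)⁻¹

/-- `μ` is a probability distribution. -/
def IsProbDist {α : Type*} (μ : α → ℝ) : Prop :=
  (∀ x, 0 ≤ μ x) ∧ (∑ᶠ x, μ x) = 1

/-- The `k`-chain distribution: each `p` gets probability proportional to the number of
`k`-chains (strictly increasing sequences `c₀ < c₁ < ⋯ < c_k`) passing through `p`. -/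
def chainDist (α : Type*) [PartialOrder α] (k : ℕ) : α → ℝ := fun p =>
  (Nat.card {c : Fin (k + 1) → α // StrictMono c ∧ ∃ i, c i = p} : ℝ) /
    (((k : ℝ) + 1) * (Nat.card {c : Fin (k + 1) → α // StrictMono c} : ℝ))

/-- The `m`-multichain distribution: each `p` gets probability proportional to the number of
`m`-multichains (weakly increasing sequences) passing through `p`. -/
def mchainDist (α : Type*) [PartialOrder α] (m : ℕ) : α → ℝ := fun p =>
  (Nat.card {c : Fin (m + 1) → α // Monotone c ∧ ∃ i, c i = p} : ℝ) /
    (Nat.card {cq : (Fin (m + 1) → α) × α // Monotone cq.1 ∧ ∃ i, cq.1 i = cq.2} : ℝ)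

/-- The modified `m`-multichain distribution: each `p` gets probability proportional to the
number of pairs `(c, i)` where `c` is an `m`-multichain and `c i = p`. -/
def mhatDist (α : Type*) [PartialOrder α] (m : ℕ) : α → ℝ := fun p =>
  (Nat.card {ci : (Fin (m + 1) → α) × Fin (m + 1) // Monotone ci.1 ∧ ci.1 ci.2 = p} : ℝ) /
    (((m : ℝ) + 1) * (Nat.card {c : Fin (m + 1) → α // Monotone c} : ℝ))

/-- The maximal chain distribution: each `p` gets probability proportional to the number of
maximal chains passing through `p`. -/
def maxchainDist (α : Type*) [PartialOrder α] : α → ℝ := fun p =>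
  (Nat.card {C : Set α // IsMaxChain (· ≤ ·) C ∧ p ∈ C} : ℝ) /
    (Nat.card {Cq : Set α × α // IsMaxChain (· ≤ ·) Cq.1 ∧ Cq.2 ∈ Cq.1} : ℝ)

/-- A poset has coincidental down-degree expectations (CDE). -/
def IsCDE (α : Type*) [PartialOrder α] : Prop :=
  expect (maxchainDist α) ddeg = expect (uni α) ddeg

/-- A poset is mCDE: the expected down-degree with respect to the `k`-chain distribution agrees
with the uniform expected down-degree for every `k = 0, 1, …, r` (i.e. every `k` for which a
`k`-chain exists). -/
def IsMCDE (α : Type*) [PartialOrder α] : Prop :=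
  ∀ k : ℕ, (∃ c : Fin (k + 1) → α, StrictMono c) →
    expect (chainDist α k) ddeg = expect (uni α) ddeg

/-- The distributive lattice `J(P)` of order ideals (lower sets) of a poset, ordered by
inclusion. -/
abbrev OIdeal (α : Type*) [PartialOrder α] : Type _ := {I : Set α // IsLowerSet I}

/-- The indicator statistic that `p` can be toggled into the order ideal `I`. -/
def Tplus {α : Type*} [PartialOrder α] (p : α) (I : OIdeal α) : ℝ :=
  if p ∉ I.1 ∧ IsLowerSet (I.1 ∪ {p}) then 1 else 0

/-- The indicator statistic that `p` can be toggled out of the order ideal `I`. -/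
def Tminus {α : Type*} [PartialOrder α] (p : α) (I : OIdeal α) : ℝ :=
  if p ∈ I.1 ∧ IsLowerSet (I.1 \ {p}) then 1 else 0

/-- A distribution on `J(P)` is toggle-symmetric if for every `p` the probability that `p` can
be toggled in equals the probability that `p` can be toggled out. -/
def ToggleSymmetric {α : Type*} [PartialOrder α] (μ : OIdeal α → ℝ) : Prop :=
  ∀ p : α, expect μ (Tplus p) = expect μ (Tminus p)

/-- `J(P)` is toggle-CDE (tCDE): every toggle-symmetric probability distribution has the same
expected down-degree as the uniform distribution. -/
def IsTCDE (α : Type*) [PartialOrder α] : Prop :=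
  ∀ μ : OIdeal α → ℝ, IsProbDist μ → ToggleSymmetric μ →
    expect μ ddeg = expect (uni (OIdeal α)) ddeg

end CDEPaper
namespace CDEPaper

/-! ### Skew shapes and shifted shapes -/

/-- The boxes of the skew shape `λ/ν` of height `a`, in matrix coordinates with 1-based rows
and columns: row `i` (for `1 ≤ i ≤ a`) consists of the boxes `[i,j]` with `ν i < j ≤ λ i`.
The poset structure is the one induced from the componentwise (product) order on `ℕ × ℕ`. -/
def skewCells (a : ℕ) (lam nu : ℕ → ℕ) : Set (ℕ × ℕ) :=
  {b | 1 ≤ b.1 ∧ b.1 ≤ a ∧ nu b.1 < b.2 ∧ b.2 ≤ lam b.1}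

/-- The boxes of the shifted Young diagram of a strict partition `λ` of length `l`:
the boxes `[i,j]` with `1 ≤ i ≤ l` and `i ≤ j ≤ λ i + i - 1`.  The poset structure is the one
induced from the componentwise (product) order on `ℕ × ℕ`. -/
def shiftCells (l : ℕ) (lam : ℕ → ℕ) : Set (ℕ × ℕ) :=
  {b | 1 ≤ b.1 ∧ b.1 ≤ l ∧ b.1 ≤ b.2 ∧ b.2 < lam b.1 + b.1}

/-- The shifted rook statistic `R^shift_{ij}` on order ideals of (the poset of) `S`. -/
def Rshift (S : Set (ℕ × ℕ)) (i j : ℕ) (I : OIdeal ↥S) : ℝ :=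
  (∑ᶠ (q : ↥S), if (q : ℕ × ℕ).1 ≤ i ∧ (q : ℕ × ℕ).2 ≤ j then Tplus q I else 0)
    + (∑ᶠ (q : ↥S), if i ≤ (q : ℕ × ℕ).1 ∧ j ≤ (q : ℕ × ℕ).2 then Tminus q I else 0)
    - (∑ᶠ (q : ↥S),
        if (q : ℕ × ℕ).1 < i ∧ (q : ℕ × ℕ).2 < j ∧ (q : ℕ × ℕ).1 < (q : ℕ × ℕ).2 then
          Tminus q I else 0)
    - (∑ᶠ (q : ↥S),
        if i < (q : ℕ × ℕ).1 ∧ j < (q : ℕ × ℕ).2 ∧ (q : ℕ × ℕ).1 < (q : ℕ × ℕ).2 then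
          Tplus q I else 0)

/-- The shifted diagram of `λ` (of length `l`) has an outward corner indexed by `i'`
(a north step followed by an east step on the southeast border, occurring at the lattice point
`(i', λ (i'+1) + i')`) if and only if `1 ≤ i' < l` and `λ i' ≥ λ (i'+1) + 2`. -/
def IsCorner (l : ℕ) (lam : ℕ → ℕ) (i' : ℕ) : Prop :=
  1 ≤ i' ∧ i' + 1 ≤ l ∧ lam (i' + 1) + 2 ≤ lam i'

/-- An order ideal `I ∈ J(P_λ^shift)` contains the outward corner indexed by `i'`
(i.e. the lattice path of `I` contains both steps of the corner):  equivalently, `I` contains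
both the last box `[i'+1, λ(i'+1)+i']` of row `i'+1` and the box `[i', λ(i'+1)+i'+1]`. -/
def ContainsCorner (l : ℕ) (lam : ℕ → ℕ) (I : OIdeal ↥(shiftCells l lam)) (i' : ℕ) : Prop :=
  (∃ q : ↥(shiftCells l lam), (q : ℕ × ℕ) = (i' + 1, lam (i' + 1) + i') ∧ q ∈ I.1) ∧
  (∃ q : ↥(shiftCells l lam), (q : ℕ × ℕ) = (i', lam (i' + 1) + i' + 1) ∧ q ∈ I.1)

/-- A (not necessarily strict) partition `ν` (with parts `ν 1 ≥ ν 2 ≥ ⋯`) which, viewed as a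
straight shape, is balanced with height and width both equal to `k`:  it has exactly `k`
nonzero parts, its first part is `k`, and every outward corner of its boundary path (which
occurs at the point `(i, ν (i+1))` whenever `ν i > ν (i+1)`) lies on the anti-diagonal
`i + j = k` of the `k × k` square. -/
def BalancedSquare (k : ℕ) (nu : ℕ → ℕ) : Prop :=
  (∀ i, 1 ≤ i → nu (i + 1) ≤ nu i) ∧
  (∀ i, 1 ≤ i → i ≤ k → 1 ≤ nu i) ∧
  (∀ i, k < i → nu i = 0) ∧
  nu 1 = k ∧
  (∀ i, 1 ≤ i → i + 1 ≤ k → nu (i + 1) < nu i → i + nu (i + 1) = k)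

/-- The poset `P_{a,1,1,d}`: a bottom chain `w₁ < ⋯ < w_a`, two incomparable elements `x, y`
covering `w_a`, and a top chain `z₁ < ⋯ < z_d` with `z₁` covering both `x` and `y`.
It is realized inside `ℕ × ℕ` (with the componentwise order) as
`w_i = (i,i)`, `x = (a+1, a)`, `y = (a, a+1)`, `z_j = (a+j, a+j)`. -/
def Pa11d (a d : ℕ) : Set (ℕ × ℕ) :=
  {p | (1 ≤ p.1 ∧ p.1 ≤ a ∧ p.2 = p.1) ∨ p = (a + 1, a) ∨ p = (a, a + 1) ∨
    (∃ j, 1 ≤ j ∧ j ≤ d ∧ p = (a + j, a + j))}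

/-! ### Shifted set-valued tableaux

Letters of the primed alphabet `1 < 1' < 2 < 2' < ⋯` are encoded as natural numbers:
the letter `m : ℕ` has value `m / 2 + 1` and is primed iff `m` is odd
(so `0 ↦ 1, 1 ↦ 1', 2 ↦ 2, 3 ↦ 2', …`); the order on letters is the usual order on `ℕ`. -/

/-- The value of a letter. -/
def letterVal (m : ℕ) : ℕ := m / 2 + 1

/-- `T` is a shifted set-valued tableau of shape given by the box set `S`:  each box gets a
finite nonempty set of letters, all entries of a box weakly precede all entries of any strictly
larger box, each unprimed letter appears at most once in each column, and each primed letter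
appears at most once in each row. -/
def IsSSVT (S : Set (ℕ × ℕ)) (T : ↥S → Finset ℕ) : Prop :=
  (∀ u, (T u).Nonempty) ∧
  (∀ u v : ↥S, u < v → ∀ x ∈ T u, ∀ y ∈ T v, x ≤ y) ∧
  (∀ u v : ↥S, u ≠ v → (u : ℕ × ℕ).2 = (v : ℕ × ℕ).2 →
    ∀ m : ℕ, m % 2 = 0 → ¬(m ∈ T u ∧ m ∈ T v)) ∧
  (∀ u v : ↥S, u ≠ v → (u : ℕ × ℕ).1 = (v : ℕ × ℕ).1 →
    ∀ m : ℕ, m % 2 = 1 → ¬(m ∈ T u ∧ m ∈ T v))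

/-- `T` is standard: distinct entry occurrences have distinct values, and the values used are
exactly `1, 2, …, N` where `N` is the total number of entries. -/
def IsStandardT (S : Set (ℕ × ℕ)) (T : ↥S → Finset ℕ) : Prop :=
  (∀ u v : ↥S, ∀ x ∈ T u, ∀ y ∈ T v, letterVal x = letterVal y → u = v ∧ x = y) ∧
  (∀ m : ℕ, 1 ≤ m → m ≤ ∑ᶠ (u : ↥S), (T u).card → ∃ u : ↥S, ∃ x ∈ T u, letterVal x = m)

/-- `T` is barely set-valued: exactly one box has two entries; all other boxes have one. -/
def IsBarelySetValued (S : Set (ℕ × ℕ)) (T : ↥S → Finset ℕ) : Prop :=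
  ∃ u₀ : ↥S, (T u₀).card = 2 ∧ ∀ u : ↥S, u ≠ u₀ → (T u).card = 1

/-- `T` is unprimed: no primed letters appear. -/
def IsUnprimed (S : Set (ℕ × ℕ)) (T : ↥S → Finset ℕ) : Prop :=
  ∀ u : ↥S, ∀ x ∈ T u, x % 2 = 0

/-- `g^λ`: the number of unprimed standard shifted tableaux of shape `λ`. -/
def gShift (l : ℕ) (lam : ℕ → ℕ) : ℕ :=
  Nat.card {T : ↥(shiftCells l lam) → Finset ℕ //
    IsSSVT (shiftCells l lam) T ∧ IsStandardT (shiftCells l lam) T ∧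
    (∀ u, (T u).card = 1) ∧ IsUnprimed (shiftCells l lam) T}

/-- The number of standard shifted barely set-valued tableaux of shape `λ`. -/
def numBarelySVT (l : ℕ) (lam : ℕ → ℕ) : ℕ :=
  Nat.card {T : ↥(shiftCells l lam) → Finset ℕ //
    IsSSVT (shiftCells l lam) T ∧ IsStandardT (shiftCells l lam) T ∧
    IsBarelySetValued (shiftCells l lam) T}

/-! ### Toggles, rowmotion, orbits -/

/-- The toggle `τ_p` on order ideals. -/
def toggle {α : Type*} [PartialOrder α] (p : α) (I : OIdeal α) : OIdeal α :=
  if h : p ∉ I.1 ∧ IsLowerSet (I.1 ∪ {p}) then ⟨I.1 ∪ {p}, h.2⟩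
  else if h' : p ∈ I.1 ∧ IsLowerSet (I.1 \ {p}) then ⟨I.1 \ {p}, h'.2⟩
  else I

/-- The composition of the toggles along a list, applied head first. -/
def applyToggles {α : Type*} [PartialOrder α] (L : List α) (I : OIdeal α) : OIdeal α :=
  L.foldl (fun J p => toggle p J) I

/-- The forward orbit of `x` under `Φ` (for invertible `Φ` on a finite set, the orbit). -/
def orbit {β : Type*} (Φ : β → β) (x : β) : Set β := {y | ∃ n : ℕ, Φ^[n] x = y}

/-- The probability distribution that is uniform on the orbit of `x` under `Φ` and zero
outside of it. -/
def orbitDist {β : Type*} (Φ : β → β) (x : β) : β → ℝ := fun y =>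
  if y ∈ orbit Φ x then (Nat.card ↥(orbit Φ x) : ℝ)⁻¹ else 0

/-- Rowmotion on order ideals: `I ↦ {x : x ≤ y for some minimal element y of P \ I}`. -/
def rowmotion {α : Type*} [PartialOrder α] (I : OIdeal α) : OIdeal α :=
  ⟨{x | ∃ y, (y ∉ I.1 ∧ ∀ z, z ∉ I.1 → z ≤ y → z = y) ∧ x ≤ y}, by
    intro a b hba ha
    obtain ⟨y, hy, hay⟩ := ha
    exact ⟨y, hy, le_trans hba hay⟩⟩

/-- The antichain cardinality statistic `I ↦ #max(I)`. -/
def antichainCard {α : Type*} [PartialOrder α] (I : OIdeal α) : ℝ :=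
  (Nat.card {p : α // p ∈ I.1 ∧ ∀ q, q ∈ I.1 → p ≤ q → p = q} : ℝ)

end CDEPaper

namespace CDEPaper

section OrderIdeal

variable {α : Type*} [PartialOrder α]

theorem isLowerSet_union_singleton_iff {I : Set α} (hI : IsLowerSet I) (p : α) :
    IsLowerSet (I ∪ {p}) ↔ ∀ z < p, z ∈ I := by
  refine ⟨fun h z hz => ?_, fun h x y hyx hx => ?_⟩
  · exact (h hz.le (Or.inr rfl)).resolve_right hz.ne
  · rcases hx with hx | rfl
    · exact Or.inl (hI hyx hx)
    · rcases hyx.eq_or_lt with rfl | hlt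
      · exact Or.inr rfl
      · exact Or.inl (h y hlt)

theorem isLowerSet_diff_singleton_iff {I : Set α} (hI : IsLowerSet I) (p : α) :
    IsLowerSet (I \ {p}) ↔ ∀ z, p < z → z ∉ I := by
  refine ⟨fun h z hz hzI => (h hz.le ⟨hzI, hz.ne'⟩).2 rfl, fun h x y hyx hx => ⟨hI hyx hx.1, ?_⟩⟩
  rintro rfl
  rcases hyx.eq_or_lt with rfl | hlt
  · exact hx.2 rfl
  · exact h x hlt hx.1

theorem isLowerSet_diff_singleton_of_maximal {I : OIdeal α} {p : α}
    (hp : ∀ q, q ∈ I.1 → p ≤ q → p = q) : IsLowerSet (I.1 \ {p}) :=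
  (isLowerSet_diff_singleton_iff I.2 p).2 fun z hpz hz => hpz.ne (hp z hz hpz.le)

theorem Tplus_eq_ite (p : α) (I : OIdeal α) :
    Tplus p I = if p ∉ I.1 ∧ ∀ z < p, z ∈ I.1 then 1 else 0 := by
  rw [Tplus, isLowerSet_union_singleton_iff I.2]

theorem Tminus_eq_ite (p : α) (I : OIdeal α) :
    Tminus p I = if p ∈ I.1 ∧ ∀ z, p < z → z ∉ I.1 then 1 else 0 := by
  rw [Tminus, isLowerSet_diff_singleton_iff I.2]

theorem mem_toggle_of_ne {p x : α} (I : OIdeal α) (hx : x ≠ p) :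
    x ∈ (toggle p I).1 ↔ x ∈ I.1 := by
  unfold toggle
  split_ifs <;> simp [hx]

theorem toggle_toggle (p : α) (I : OIdeal α) : toggle p (toggle p I) = I := by
  have hI := I.2
  unfold toggle
  split_ifs with h₁ h₂ h₃ h₄
  all_goals first
    | exact absurd (Or.inr rfl) h₂.1
    | (apply Subtype.ext; ext x; by_cases hx : x = p <;> simp_all)

theorem toggle_bijective (p : α) : Function.Bijective (toggle p (α := α)) :=
  Function.Involutive.bijective (toggle_toggle p)

theorem Tplus_toggle_self (p : α) (I : OIdeal α) : Tplus p (toggle p I) = Tminus p I := by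
  have hI := I.2
  unfold toggle Tplus Tminus
  split_ifs <;> simp_all

theorem Tminus_toggle_self (p : α) (I : OIdeal α) : Tminus p (toggle p I) = Tplus p I := by
  rw [← Tplus_toggle_self, toggle_toggle]

theorem toggle_eq_self_of_lt_of_mem {q w : α} {I : OIdeal α} (hqw : q < w) (hw : w ∈ I.1) :
    toggle q I = I := by
  have hq : q ∈ I.1 := I.2 hqw.le hw
  rw [toggle, dif_neg (fun h => h.1 hq), dif_neg]
  rintro ⟨-, h⟩
  exact (isLowerSet_diff_singleton_iff I.2 q).1 h w hqw hw

theorem toggle_eq_self_of_lt_of_not_mem {q w : α} {I : OIdeal α} (hwq : w < q)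
    (hw : w ∉ I.1) : toggle q I = I := by
  have hq : q ∉ I.1 := fun h => hw (I.2 hwq.le h)
  rw [toggle, dif_neg, dif_neg (fun h => hq h.1)]
  rintro ⟨-, h⟩
  exact hw ((isLowerSet_union_singleton_iff I.2 q).1 h w hwq)

theorem Tplus_toggle_of_not_covBy {p q : α} (hqp : q ≠ p) (hcov : ¬ q ⋖ p) (I : OIdeal α) :
    Tplus p (toggle q I) = Tplus p I := by
  simp only [Tplus_eq_ite]
  congr 1
  apply propext
  by_cases hlt : q < p
  · obtain ⟨w, hqw, hwp⟩ := (not_covBy_iff hlt).1 hcov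
    -- `w` freezes the toggle at `q` when `w ∈ I`, and otherwise forbids adding `p`.
    by_cases hw : w ∈ I.1
    · rw [toggle_eq_self_of_lt_of_mem hqw hw]
    · have hw' : w ∉ (toggle q I).1 := by rwa [mem_toggle_of_ne I hqw.ne']
      exact iff_of_false (fun h => hw' (h.2 w hwp)) (fun h => hw (h.2 w hwp))
  · refine and_congr (not_congr (mem_toggle_of_ne I hqp.symm)) (forall₂_congr fun z hz => ?_)
    exact mem_toggle_of_ne I (by rintro rfl; exact hlt hz)

theorem Tminus_toggle_of_not_covBy {p q : α} (hqp : q ≠ p) (hcov : ¬ p ⋖ q) (I : OIdeal α) :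
    Tminus p (toggle q I) = Tminus p I := by
  simp only [Tminus_eq_ite]
  congr 1
  apply propext
  by_cases hlt : p < q
  · obtain ⟨w, hpw, hwq⟩ := (not_covBy_iff hlt).1 hcov
    by_cases hw : w ∈ I.1
    · have hw' : w ∈ (toggle q I).1 := by rwa [mem_toggle_of_ne I hwq.ne]
      exact iff_of_false (fun h => h.2 w hpw hw') (fun h => h.2 w hpw hw)
    · rw [toggle_eq_self_of_lt_of_not_mem hwq hw]
  · refine and_congr (mem_toggle_of_ne I hqp.symm) (forall₂_congr fun z hz => ?_)
    exact not_congr (mem_toggle_of_ne I (by rintro rfl; exact hlt hz))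

theorem Tplus_sub_Tminus (p : α) (I : OIdeal α) :
    Tplus p I - Tminus p I =
      (if p ∈ (toggle p I).1 then 1 else 0) - (if p ∈ I.1 then 1 else 0) := by
  unfold Tplus Tminus toggle
  split_ifs <;> simp_all

end OrderIdeal

section Toggles

variable {α : Type*} [PartialOrder α]

theorem applyToggles_cons (q : α) (L : List α) (I : OIdeal α) :
    applyToggles (q :: L) I = applyToggles L (toggle q I) := rfl

theorem applyToggles_append (L₁ L₂ : List α) (I : OIdeal α) :
    applyToggles (L₁ ++ L₂) I = applyToggles L₂ (applyToggles L₁ I) :=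
  List.foldl_append

theorem applyToggles_bijective (L : List α) : Function.Bijective (applyToggles L (α := α)) := by
  induction L with
  | nil => exact Function.bijective_id
  | cons q L ih => exact ih.comp (toggle_bijective q)

theorem mem_applyToggles_of_not_mem {p : α} {L : List α} (hp : p ∉ L) (I : OIdeal α) :
    p ∈ (applyToggles L I).1 ↔ p ∈ I.1 := by
  induction L generalizing I with
  | nil => rfl
  | cons q L ih =>
    rw [List.mem_cons, not_or] at hp
    rw [applyToggles_cons, ih hp.2, mem_toggle_of_ne I hp.1]

theorem Tplus_applyToggles {p : α} {L : List α} (hp : p ∉ L) (hcov : ∀ q ∈ L, ¬ q ⋖ p)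
    (I : OIdeal α) : Tplus p (applyToggles L I) = Tplus p I := by
  induction L generalizing I with
  | nil => rfl
  | cons q L ih =>
    rw [List.mem_cons, not_or] at hp
    rw [applyToggles_cons, ih hp.2 (fun x hx => hcov x (.tail q hx)),
      Tplus_toggle_of_not_covBy (Ne.symm hp.1) (hcov q (.head L))]

theorem Tminus_applyToggles {p : α} {L : List α} (hp : p ∉ L) (hcov : ∀ q ∈ L, ¬ p ⋖ q)
    (I : OIdeal α) : Tminus p (applyToggles L I) = Tminus p I := by
  induction L generalizing I with
  | nil => rfl
  | cons q L ih =>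
    rw [List.mem_cons, not_or] at hp
    rw [applyToggles_cons, ih hp.2 (fun x hx => hcov x (.tail q hx)),
      Tminus_toggle_of_not_covBy (Ne.symm hp.1) (hcov q (.head L))]

end Toggles

section Expectation

variable {β : Type*}

theorem expect_sub [Finite β] (μ f g : β → ℝ) :
    expect μ (fun y => f y - g y) = expect μ f - expect μ g := by
  simp only [expect, mul_sub]
  exact finsum_sub_distrib (Set.toFinite _) (Set.toFinite _)

theorem expect_comp_of_invariant {μ : β → ℝ} {Φ : β → β} (hΦ : Function.Bijective Φ)
    (hμ : ∀ y, μ (Φ y) = μ y) (f : β → ℝ) : expect μ (fun y => f (Φ y)) = expect μ f := by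
  calc ∑ᶠ y, μ y * f (Φ y) = ∑ᶠ y, μ (Φ y) * f (Φ y) := by simp only [hμ]
    _ = expect μ f := finsum_comp_equiv (Equiv.ofBijective Φ hΦ) (f := fun y => μ y * f y)

variable [Finite β] {Φ : β → β}

theorem apply_mem_orbit_iff (hΦ : Function.Injective Φ) {x y : β} :
    Φ y ∈ orbit Φ x ↔ y ∈ orbit Φ x := by
  refine ⟨fun ⟨n, hn⟩ => ?_, fun ⟨n, hn⟩ => ⟨n + 1, by rw [Function.iterate_succ_apply', hn]⟩⟩
  obtain ⟨m, hm, hper⟩ := hΦ.mem_periodicPts x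
  refine ⟨n + m - 1, hΦ ?_⟩
  rw [← Function.iterate_succ_apply' Φ, Nat.succ_eq_add_one, Nat.sub_add_cancel (by omega),
    Function.iterate_add_apply, hper.eq, hn]

theorem orbitDist_invariant (hΦ : Function.Injective Φ) (x y : β) :
    orbitDist Φ x (Φ y) = orbitDist Φ x y := by
  simp only [orbitDist, apply_mem_orbit_iff hΦ]

theorem isProbDist_orbitDist (x : β) : IsProbDist (orbitDist Φ x) := by
  refine ⟨fun y => by unfold orbitDist; positivity, ?_⟩
  have : Fintype β := Fintype.ofFinite β
  have hx : x ∈ orbit Φ x := ⟨0, rfl⟩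
  rw [finsum_eq_sum_of_fintype]
  simp only [orbitDist]
  rw [Finset.sum_ite, Finset.sum_const_zero, add_zero, Finset.sum_const, nsmul_eq_mul,
    Nat.card_eq_fintype_card, Fintype.card_subtype]
  refine mul_inv_cancel₀ (Nat.cast_ne_zero.2 (Finset.card_ne_zero.2 ⟨x, ?_⟩))
  simpa using hx

end Expectation

section Rowmotion

variable {α : Type*} [PartialOrder α]

theorem Tplus_eq_Tminus_rowmotion (p : α) (I : OIdeal α) :
    Tplus p I = Tminus p (rowmotion I) := by
  rw [Tplus_eq_ite, Tminus_eq_ite]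
  congr 1
  apply propext
  constructor
  · rintro ⟨hp, hlow⟩
    have hmin : ∀ z, z ∉ I.1 → z ≤ p → z = p := fun z hz hzp =>
      hzp.eq_or_lt.resolve_right fun hlt => hz (hlow z hlt)
    refine ⟨⟨p, ⟨hp, hmin⟩, le_rfl⟩, fun z hpz ⟨y, ⟨_, hymin⟩, hzy⟩ => ?_⟩
    exact (hpz.trans_le hzy).ne (hymin p hp (hpz.le.trans hzy))
  · rintro ⟨⟨y, hy, hpy⟩, hmax⟩
    obtain rfl : p = y := hpy.eq_or_lt.resolve_right fun hlt => hmax y hlt ⟨y, hy, le_rfl⟩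
    exact ⟨hy.1, fun z hzp => by_contra fun hz => hzp.ne (hy.2 z hz hzp.le)⟩

variable [Finite α]

theorem not_mem_iff_exists_Tplus_eq_one (I : OIdeal α) (x : α) :
    x ∉ I.1 ↔ ∃ y ≤ x, Tplus y I = 1 := by
  refine ⟨fun hx => ?_, fun ⟨y, hyx, hy⟩ hx => ?_⟩
  · obtain ⟨y, hyx, hy⟩ := Finite.exists_le_minimal (p := (· ∉ I.1)) hx
    refine ⟨y, hyx, ?_⟩
    rw [Tplus_eq_ite, if_pos ⟨hy.1, fun z hz => by_contra fun hzI => hz.not_ge (hy.2 hzI hz.le)⟩]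
  · rw [Tplus_eq_ite] at hy
    split_ifs at hy with h
    · exact h.1 (I.2 hyx hx)
    · exact zero_ne_one hy

theorem rowmotion_injective : Function.Injective (rowmotion (α := α)) := by
  intro I J h
  have hT : ∀ y, Tplus y I = Tplus y J := fun y => by
    rw [Tplus_eq_Tminus_rowmotion, h, ← Tplus_eq_Tminus_rowmotion]
  exact Subtype.ext <| Set.ext fun x =>
    not_iff_not.1 (by simp only [not_mem_iff_exists_Tplus_eq_one, hT])

theorem toggleSymmetric_of_rowmotion_invariant {μ : OIdeal α → ℝ}
    (hμ : ∀ I, μ (rowmotion I) = μ I) : ToggleSymmetric μ := fun p => by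
  rw [show Tplus p = fun I => Tminus p (rowmotion I) from funext (Tplus_eq_Tminus_rowmotion p)]
  exact expect_comp_of_invariant (Finite.injective_iff_bijective.1 rowmotion_injective) hμ _

end Rowmotion

section DownDegree

variable {α : Type*} [PartialOrder α] [Finite α]

theorem covBy_iff_exists_maximal {I J : OIdeal α} :
    J ⋖ I ↔ ∃ p, (p ∈ I.1 ∧ ∀ q, q ∈ I.1 → p ≤ q → p = q) ∧ J.1 = I.1 \ {p} := by
  constructor
  · intro hJI
    obtain ⟨p, hp⟩ := (Set.toFinite (I.1 \ J.1)).exists_maximal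
      (Set.nonempty_of_ssubset hJI.1)
    have hpmax : ∀ q, q ∈ I.1 → p ≤ q → p = q := fun q hq hpq =>
      le_antisymm hpq (hp.2 ⟨hq, fun hqJ => hp.1.2 (J.2 hpq hqJ)⟩ hpq)
    let K : OIdeal α := ⟨I.1 \ {p}, isLowerSet_diff_singleton_of_maximal hpmax⟩
    have hJK : J ≤ K := fun y hy => ⟨hJI.1.le hy, by rintro rfl; exact hp.1.2 hy⟩
    have hKI : K < I := lt_of_le_of_ne (fun y hy => hy.1) fun h => (h ▸ hp.1.1 : p ∈ K.1).2 rfl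
    exact ⟨p, ⟨hp.1.1, hpmax⟩, congrArg Subtype.val (hJK.eq_of_not_lt fun h => hJI.2 h hKI)⟩
  · rintro ⟨p, ⟨hp, -⟩, hJ⟩
    refine CovBy.of_image (OrderEmbedding.subtype _) ?_
    simpa [hJ] using Set.sdiff_singleton_covBy hp

theorem ddeg_eq_antichainCard (I : OIdeal α) : ddeg I = antichainCard I := by
  rw [ddeg, antichainCard]
  congr 1
  let g : {p : α // p ∈ I.1 ∧ ∀ q, q ∈ I.1 → p ≤ q → p = q} → {J : OIdeal α // J ⋖ I} :=
    fun p => ⟨⟨I.1 \ {p.1}, isLowerSet_diff_singleton_of_maximal p.2.2⟩,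
      covBy_iff_exists_maximal.2 ⟨p, p.2, rfl⟩⟩
  refine (Nat.card_congr (Equiv.ofBijective g ⟨fun p p' h => ?_, fun J => ?_⟩)).symm
  · have h' : I.1 \ {p.1} = I.1 \ {p'.1} := congrArg (fun J => J.1.1) h
    exact Subtype.ext (by_contra fun hne => ((Set.ext_iff.1 h' p.1).2 ⟨p.2.1, hne⟩).2 rfl)
  · obtain ⟨p, hp, hJ⟩ := covBy_iff_exists_maximal.1 J.2
    exact ⟨⟨p, hp⟩, Subtype.ext (Subtype.ext hJ.symm)⟩

theorem expect_antichainCard_of_isTCDE (htcde : IsTCDE α) {μ : OIdeal α → ℝ}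
    (hμ : IsProbDist μ) (hsym : ToggleSymmetric μ) :
    expect μ antichainCard = expect (uni (OIdeal α)) ddeg := by
  rw [← htcde μ hμ hsym]
  simp only [expect, ddeg_eq_antichainCard]

end DownDegree

theorem forall_not_or_forall_not_of_pairwise {α β : Type*} [PartialOrder β] {g : α → β}
    {L₁ L₂ : List α} {p : α} (hL : (L₁ ++ p :: L₂).Pairwise fun a b => g b ≤ g a)
    {S : α → Prop} (hS : ∀ q q', S q → S q' → g q = g q') (hSp : ∀ q, S q → g q ≠ g p) :
    (∀ q ∈ L₁, ¬ S q) ∨ (∀ q ∈ L₂, ¬ S q) := by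
  by_contra! h
  obtain ⟨⟨q₁, hq₁, hS₁⟩, ⟨q₂, hq₂, hS₂⟩⟩ := h
  obtain ⟨-, hcons, hcross⟩ := List.pairwise_append.1 hL
  have h₁ : g p ≤ g q₁ := hcross q₁ hq₁ p List.mem_cons_self
  have h₂ : g q₂ ≤ g p := List.rel_of_pairwise_cons hcons hq₂
  exact hSp q₁ hS₁ (le_antisymm (hS q₁ q₂ hS₁ hS₂ ▸ h₂) h₁)

section ToggleOrder

variable {α : Type*} [PartialOrder α] [Finite α]

theorem expect_Tplus_eq_expect_Tminus {L₁ L₂ : List α} {p : α} (hp₁ : p ∉ L₁) (hp₂ : p ∉ L₂)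
    (hdown : (∀ q ∈ L₁, ¬ q ⋖ p) ∨ (∀ q ∈ L₂, ¬ q ⋖ p))
    (hup : (∀ q ∈ L₁, ¬ p ⋖ q) ∨ (∀ q ∈ L₂, ¬ p ⋖ q)) {μ : OIdeal α → ℝ}
    (hμ : ∀ I, μ (applyToggles (L₁ ++ p :: L₂) I) = μ I) :
    expect μ (Tplus p) = expect μ (Tminus p) := by
  have hΦ : ∀ I, applyToggles (L₁ ++ p :: L₂) I =
      applyToggles L₂ (toggle p (applyToggles L₁ I)) := fun I => by
    rw [applyToggles_append, applyToggles_cons]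
  have hinv := expect_comp_of_invariant (applyToggles_bijective _) hμ
  have hmid : expect μ (fun I => Tplus p (applyToggles L₁ I)) =
      expect μ (fun I => Tminus p (applyToggles L₁ I)) := by
    have hχ := hinv fun I => if p ∈ I.1 then 1 else 0
    rw [← sub_eq_zero, ← expect_sub] at hχ ⊢
    convert hχ using 3 with I
    rw [Tplus_sub_Tminus, hΦ, mem_applyToggles_of_not_mem hp₂, mem_applyToggles_of_not_mem hp₁]
  have hplus : expect μ (Tplus p) = expect μ (fun I => Tplus p (applyToggles L₁ I)) := by
    rcases hdown with h | h
    · simp only [Tplus_applyToggles hp₁ h]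
    · rw [← hinv, hmid]
      simp only [hΦ, Tplus_applyToggles hp₂ h, Tplus_toggle_self]
  have hminus : expect μ (Tminus p) = expect μ (fun I => Tminus p (applyToggles L₁ I)) := by
    rcases hup with h | h
    · simp only [Tminus_applyToggles hp₁ h]
    · rw [← hinv, ← hmid]
      simp only [hΦ, Tminus_applyToggles hp₂ h, Tminus_toggle_self]
  rw [hplus, hminus, hmid]

theorem toggleSymmetric_of_applyToggles_invariant {β : Type*} [PartialOrder β] (rk : α → ℕ)
    (hrk : ∀ p q : α, p ⋖ q → rk q = rk p + 1) (g : α → β)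
    (hg : ∀ a b, g a = g b ↔ rk a = rk b) {L : List α} (hnodup : L.Nodup) (hL : ∀ p, p ∈ L)
    (hsorted : L.Pairwise fun a b => g b ≤ g a) {μ : OIdeal α → ℝ}
    (hμ : ∀ I, μ (applyToggles L I) = μ I) : ToggleSymmetric μ := by
  intro p
  obtain ⟨L₁, L₂, rfl⟩ := List.append_of_mem (hL p)
  have hp : p ∉ L₁ ++ L₂ := (List.nodup_cons.1 (List.nodup_middle.1 hnodup)).1
  rw [List.mem_append, not_or] at hp
  refine expect_Tplus_eq_expect_Tminus hp.1 hp.2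
    (forall_not_or_forall_not_of_pairwise hsorted (fun q q' hq hq' => ?_) (fun q hq => ?_))
    (forall_not_or_forall_not_of_pairwise hsorted (fun q q' hq hq' => ?_) (fun q hq => ?_)) hμ
  · rw [hg]; have := hrk _ _ hq; have := hrk _ _ hq'; omega
  · rw [Ne, hg]; have := hrk _ _ hq; omega
  · rw [hg]; have := hrk _ _ hq; have := hrk _ _ hq'; omega
  · rw [Ne, hg]; have := hrk _ _ hq; omega

end ToggleOrder

/-- Corollary `cor:homomesy`.  Let `P` be a finite poset such that `J(P)`
is tCDE with edge density `c`.  Then the antichain cardinality statistic `I ↦ #max(I)` is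
`c`-mesic with respect to the action of rowmotion `Φ_row` on `J(P)`: the average of `#max(I)`
over every `Φ_row`-orbit equals `c`.  If moreover `P` is ranked with rank function `rk` taking
values in `{0, …, r}`, then for every permutation `σ` of `{0, …, r}` the antichain cardinality
statistic is also `c`-mesic with respect to the rank-permuted rowmotion `Φ_{row(σ)}`
(realized as the composition of toggles along any list `L` enumerating `P` with
`σ⁻¹(rk(·))` weakly decreasing). -/
theorem statement19 (α : Type*) [Finite α] [PartialOrder α] (c : ℝ)
    (htcde : IsTCDE α)
    (hc : expect (uni (OIdeal α)) ddeg = c) :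
    (∀ I₀ : OIdeal α, expect (orbitDist rowmotion I₀) antichainCard = c) ∧
    (∀ (rk : α → ℕ) (r : ℕ), (∃ p, rk p = 0) → (∀ p q : α, p ⋖ q → rk q = rk p + 1) →
      ∀ (hler : ∀ p, rk p ≤ r) (σ : Equiv.Perm (Fin (r + 1))) (L : List α),
        L.Nodup → (∀ p : α, p ∈ L) →
        (∀ s t : Fin L.length, s ≤ t →
          ((σ.symm ⟨rk (L.get t), Nat.lt_succ_of_le (hler _)⟩ : Fin (r + 1)) : ℕ) ≤
            ((σ.symm ⟨rk (L.get s), Nat.lt_succ_of_le (hler _)⟩ : Fin (r + 1)) : ℕ)) →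
        ∀ I₀ : OIdeal α, expect (orbitDist (applyToggles L) I₀) antichainCard = c) := by
  refine ⟨fun I₀ => ?_, fun rk r _ hrk hler σ L hnodup hL hsorted I₀ => ?_⟩
  · rw [← hc]
    exact expect_antichainCard_of_isTCDE htcde (isProbDist_orbitDist I₀)
      (toggleSymmetric_of_rowmotion_invariant (orbitDist_invariant rowmotion_injective I₀))
  · let level (q : α) : Fin (r + 1) := σ.symm ⟨rk q, Nat.lt_succ_of_le (hler q)⟩
    have hlevel : ∀ a b, level a = level b ↔ rk a = rk b := fun a b => by
      simp [level, Fin.ext_iff]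
    rw [← hc]
    exact expect_antichainCard_of_isTCDE htcde (isProbDist_orbitDist I₀)
      (toggleSymmetric_of_applyToggles_invariant rk hrk level hlevel hnodup hL
        (List.pairwise_iff_get.2 fun s t hst => hsorted s t hst.le)
        (orbitDist_invariant (applyToggles_bijective L).1 I₀))

end CDEPaper
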